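/- arXiv:2202.05053 — 3 statements merged into one kernel-verified Lean document; each statement's English description precedes it below -/
import Mathlib

section
/- Let m : ℕ → ℝ satisfy m 0 = 0 and m (n+1) - m n ≥ (OPT - m n)/C for all n, where OPT ≥ 0 and C ≥ 1. Then OPT - m C ≤ (1 - 1/C)^C * OPT, and hence m C ≥ (1 - 1/e) * OPT. -/
theorem greedy_final_bound (m : ℕ → ℝ) (OPT : ℝ) (C : ℕ)
    (hOPT : 0 ≤ OPT) (hC : 1 ≤ C) (hm0 : m 0 = 0)
    (hrec : ∀ n, m (n + 1) - m n ≥ (OPT - m n) / (C : ℝ)) :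
    OPT - m C ≤ (1 - 1 / (C : ℝ)) ^ C * OPT ∧
      m C ≥ (1 - 1 / Real.exp 1) * OPT := by
  have hCpos : (0 : ℝ) < C := by exact_mod_cast Nat.lt_of_lt_of_le Nat.zero_lt_one hC
  have hCne : (C : ℝ) ≠ 0 := ne_of_gt hCpos
  have hnn : (0 : ℝ) ≤ 1 - 1 / (C : ℝ) := by
    have : 1 / (C : ℝ) ≤ 1 := by
      rw [div_le_one hCpos]; exact_mod_cast hC
    linarith
  have key : ∀ n, OPT - m n ≤ (1 - 1 / (C : ℝ)) ^ n * OPT := by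
    intro n
    induction n with
    | zero => simp [hm0]
    | succ k ih =>
      have h := hrec k
      have : OPT - m (k + 1) ≤ (1 - 1 / (C : ℝ)) * (OPT - m k) := by
        have : (OPT - m k) / (C : ℝ) = (1 / (C : ℝ)) * (OPT - m k) := by ring
        nlinarith [hrec k]
      calc OPT - m (k + 1) ≤ (1 - 1 / (C : ℝ)) * (OPT - m k) := this
        _ ≤ (1 - 1 / (C : ℝ)) * ((1 - 1 / (C : ℝ)) ^ k * OPT) := by
            exact mul_le_mul_of_nonneg_left ih hnn
        _ = (1 - 1 / (C : ℝ)) ^ (k + 1) * OPT := by ring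
  have h1 := key C
  refine ⟨h1, ?_⟩
  have hexp : (1 - 1 / (C : ℝ)) ^ C ≤ 1 / Real.exp 1 := by
    have hb : 1 - 1 / (C : ℝ) ≤ Real.exp (-(1 / (C : ℝ))) := by
      have := Real.add_one_le_exp (-(1 / (C : ℝ)))
      linarith
    calc (1 - 1 / (C : ℝ)) ^ C ≤ (Real.exp (-(1 / (C : ℝ)))) ^ C :=
          pow_le_pow_left₀ hnn hb C
      _ = Real.exp ((C : ℝ) * (-(1 / (C : ℝ)))) := by
          rw [← Real.exp_nat_mul]
      _ = Real.exp (-1) := by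
          congr 1
          field_simp
      _ = 1 / Real.exp 1 := by rw [Real.exp_neg]; ring
  have : (1 - 1 / (C : ℝ)) ^ C * OPT ≤ (1 / Real.exp 1) * OPT :=
    mul_le_mul_of_nonneg_right hexp hOPT
  have := h1.trans this
  linarith
end

section
/- Under the hypotheses m 0 = 0 and m (n+1) ≥ m n + (OPT - m n)/C with OPT ≥ 0 and C ≥ 1, the explicit bound m n ≥ OPT * (1 - (1 - 1/C)^n) holds for every natural number n. -/
theorem greedy_explicit_lower_bound (m : ℕ → ℝ) (OPT : ℝ) (C : ℕ)
    (hOPT : 0 ≤ OPT) (hC : 1 ≤ C) (hm0 : m 0 = 0)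
    (hrec : ∀ n, m (n + 1) ≥ m n + (OPT - m n) / (C : ℝ)) :
    ∀ n : ℕ, m n ≥ OPT * (1 - (1 - 1 / (C : ℝ)) ^ n) := by
  have hCpos : (0:ℝ) < C := by exact_mod_cast Nat.lt_of_lt_of_le Nat.zero_lt_one hC
  have hc0 : (0:ℝ) ≤ 1 - 1 / (C : ℝ) := by
    have : 1 / (C : ℝ) ≤ 1 := by
      rw [div_le_one hCpos]; exact_mod_cast hC
    linarith
  intro n
  induction n with
  | zero => simp [hm0]
  | succ n ih =>
    have h := hrec n
    have key : m n + (OPT - m n) / (C : ℝ)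
        ≥ OPT * (1 - (1 - 1 / (C : ℝ)) ^ (n + 1)) := by
      have : m n + (OPT - m n) / (C : ℝ) = m n * (1 - 1 / (C : ℝ)) + OPT / C := by
        field_simp; ring
      rw [this, pow_succ]
      have h1 : m n * (1 - 1 / (C : ℝ)) ≥ OPT * (1 - (1 - 1 / (C : ℝ)) ^ n) * (1 - 1 / (C : ℝ)) :=
        mul_le_mul_of_nonneg_right ih hc0
      have : OPT * (1 - (1 - 1 / (C : ℝ)) ^ n * (1 - 1 / (C : ℝ)))
          = OPT * (1 - (1 - 1 / (C : ℝ)) ^ n) * (1 - 1 / (C : ℝ)) + OPT / C := by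
        field_simp; ring
      rw [this]; linarith
    linarith
end

section
/- If the greedy choice in round n+1 covers at least as many new elements as any single optimal-part set would (i.e., m_{n+1} - m_n ≥ max_c |U_c* \ M_n|), and ⋃_c U_c* has cardinality OPT with the sets indexed by c ∈ Fin C, then m_{n+1} - m_n ≥ (OPT - |M_n|)/C. -/
theorem greedy_round_progress {α : Type*} [DecidableEq α] (C : ℕ) (hC : 1 ≤ C)
    (Ustar : Fin C → Finset α) (OPT : ℝ)
    (hOPT : ((Finset.univ.biUnion Ustar).card : ℝ) = OPT)
    (Mn : Finset α) (mnext : ℝ)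
    (hmax : ∀ c : Fin C, ((Ustar c \ Mn).card : ℝ) ≤ mnext - (Mn.card : ℝ)) :
    mnext - (Mn.card : ℝ) ≥ (OPT - (Mn.card : ℝ)) / (C : ℝ) := by
  have hCpos : (0:ℝ) < C := by exact_mod_cast hC
  rw [ge_iff_le, div_le_iff₀ hCpos]
  have h1 : (Finset.univ.biUnion Ustar).card
      ≤ ((Finset.univ.biUnion Ustar) \ Mn).card + Mn.card := by
    calc (Finset.univ.biUnion Ustar).card
        ≤ ((Finset.univ.biUnion Ustar) \ Mn ∪ Mn).card :=
          Finset.card_le_card (fun x hx => by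
            by_cases h : x ∈ Mn <;> simp [Finset.mem_union, Finset.mem_sdiff, hx, h])
      _ ≤ _ := Finset.card_union_le _ _
  have h2 : ((Finset.univ.biUnion Ustar) \ Mn).card
      ≤ ∑ c : Fin C, (Ustar c \ Mn).card := by
    have : (Finset.univ.biUnion Ustar) \ Mn = Finset.univ.biUnion (fun c => Ustar c \ Mn) := by
      ext x
      simp only [Finset.mem_sdiff, Finset.mem_biUnion, Finset.mem_univ, true_and]
      tauto
    rw [this]
    exact Finset.card_biUnion_le
  have h3 : (∑ c : Fin C, ((Ustar c \ Mn).card : ℝ)) ≤ C * (mnext - Mn.card) := by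
    calc (∑ c : Fin C, ((Ustar c \ Mn).card : ℝ))
        ≤ ∑ _c : Fin C, (mnext - Mn.card) := Finset.sum_le_sum fun c _ => hmax c
      _ = C * (mnext - Mn.card) := by simp [mul_comm]; ring
  have := h1.trans (Nat.add_le_add_right h2 _)
  have hcast : (OPT : ℝ) ≤ (∑ c : Fin C, ((Ustar c \ Mn).card : ℝ)) + Mn.card := by
    rw [← hOPT]
    push_cast at this ⊢
    exact_mod_cast this
  linarith [mul_comm (mnext - (Mn.card:ℝ)) (C:ℝ)]
end
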